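/- Let M be an odd positive integer, χ a Dirichlet character modulo M, ε a complex number with |ε| = 1, and ♢ an integer with 1 ≤ ♢ < M. Let L : ℤ → ℂ be any function such that for every positive integer D with D ≡ ♢ (mod M) one has L(D) = χ(D) · J(D | M) · ε · conj(L(D)), where J(· | M) denotes the Jacobi symbol. Then there exists a nonzero complex number u such that for every positive integer D with D ≡ ♢ (mod M) there is a real number t with L(D) = t · u; that is, all the values L(D) lie on a single line through the origin in the complex plane. -/

import Mathlib

/-!
Write `c = χ(♢) · J(♢ | M) · ε`; by periodicity of `χ` and of the Jacobi symbol every value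
`z = L D` satisfies `z = c · conj z`. For two such solutions `z, w` the product `z · conj w`
equals its own conjugate, since `conj (z · conj w) = conj z · c · conj w = z · conj w`.
So every solution is a real multiple of any fixed nonzero one, and if there is none, all
values vanish and any `u ≠ 0` will do.
-/

open ComplexConjugate

namespace Complex

theorem conj_mul_conj_eq_of_eq_mul_conj {c z w : ℂ} (hz : z = c * conj z)
    (hw : w = c * conj w) : conj (z * conj w) = z * conj w := by
  calc conj (z * conj w) = conj z * (c * conj w) := by rw [map_mul, conj_conj, ← hw]
    _ = c * conj z * conj w := by ring
    _ = z * conj w := by rw [← hz]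

theorem exists_ofReal_mul_eq_of_conj_mul_conj_eq {z w : ℂ} (hw : w ≠ 0)
    (h : conj (z * conj w) = z * conj w) : ∃ t : ℝ, z = t * w := by
  obtain ⟨r, hr⟩ := conj_eq_iff_real.mp h
  have hnormSq : (normSq w : ℂ) ≠ 0 := ofReal_ne_zero.mpr (normSq_pos.mpr hw).ne'
  refine ⟨r / normSq w, ?_⟩
  calc z = z * conj w * w / normSq w := by
        rw [mul_assoc, conj_mul', ← ofReal_pow, ← normSq_eq_norm_sq, mul_div_cancel_right₀ _ hnormSq]
    _ = (r / normSq w : ℝ) * w := by rw [hr]; push_cast; ring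

theorem exists_line_of_forall_eq_mul_conj (c : ℂ) (S : Set ℂ) (hS : ∀ z ∈ S, z = c * conj z) :
    ∃ u : ℂ, u ≠ 0 ∧ ∀ z ∈ S, ∃ t : ℝ, z = t * u := by
  by_cases hne : ∃ w ∈ S, w ≠ 0
  · obtain ⟨w, hwS, hw⟩ := hne
    exact ⟨w, hw, fun z hz => exists_ofReal_mul_eq_of_conj_mul_conj_eq hw
      (conj_mul_conj_eq_of_eq_mul_conj (hS z hz) (hS w hwS))⟩
  · push Not at hne
    exact ⟨1, one_ne_zero, fun z hz => ⟨0, by simp [hne z hz]⟩⟩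

end Complex

theorem central_values_on_line_through_origin_general
    (M : ℕ) (χ : DirichletCharacter ℂ M)
    (ε : ℂ) (d : ℤ)
    (L : ℤ → ℂ)
    (hL : ∀ D : ℤ, 0 < D → D ≡ d [ZMOD (M : ℤ)] →
      L D = χ (D : ZMod M) * (jacobiSym D M : ℂ) * ε * (starRingEnd ℂ) (L D)) :
    ∃ u : ℂ, u ≠ 0 ∧
      ∀ D : ℤ, 0 < D → D ≡ d [ZMOD (M : ℤ)] → ∃ t : ℝ, L D = (t : ℂ) * u := by
  have hclass : ∀ z ∈ L '' {D | 0 < D ∧ D ≡ d [ZMOD (M : ℤ)]},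
      z = χ (d : ZMod M) * (jacobiSym d M : ℂ) * ε * conj z := by
    rintro _ ⟨D, ⟨hD, hDd⟩, rfl⟩
    rw [← (ZMod.intCast_eq_intCast_iff D d M).mpr hDd, ← jacobiSym.mod_left' hDd]
    exact hL D hD hDd
  obtain ⟨u, hu, hline⟩ := Complex.exists_line_of_forall_eq_mul_conj _ _ hclass
  exact ⟨u, hu, fun D hD hDd => hline (L D) ⟨D, ⟨hD, hDd⟩, rfl⟩⟩

/-- All values `L D`, for positive integers `D ≡ ♢ (mod M)` of a function `L`
satisfying the abstract functional equation
`L D = χ D * J(D | M) * ε * conj (L D)`, lie on a single line through the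
origin in the complex plane. -/
theorem central_values_on_line_through_origin
    (M : ℕ) (hModd : Odd M) (hMpos : 0 < M) (χ : DirichletCharacter ℂ M)
    (ε : ℂ) (hε : ‖ε‖ = 1) (d : ℤ) (hd1 : 1 ≤ d) (hdM : d < (M : ℤ))
    (L : ℤ → ℂ)
    (hL : ∀ D : ℤ, 0 < D → D ≡ d [ZMOD (M : ℤ)] →
      L D = χ (D : ZMod M) * (jacobiSym D M : ℂ) * ε * (starRingEnd ℂ) (L D)) :
    ∃ u : ℂ, u ≠ 0 ∧
      ∀ D : ℤ, 0 < D → D ≡ d [ZMOD (M : ℤ)] → ∃ t : ℝ, L D = (t : ℂ) * u :=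
  central_values_on_line_through_origin_general M χ ε d L hL
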